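/- arXiv:1905.07336 — 2 statements merged into one kernel-verified Lean document; each statement's English description precedes it below -/
import Mathlib

section
/- Let u : ℝ^d → ℂ be measurable with |u(ξ)| ≤ C⟨ξ⟩^m for some C, m ≥ 0, and let g ∈ 𝒮(ℝ^d) (Schwartz). Suppose Γ₂ ⊆ ℝ^d \ {0} is an open cone such that for every N ≥ 0, sup_{ξ ∈ Γ₂} ⟨ξ⟩^N |u(ξ)| < ∞. Let Γ₂' be an open cone with closure of Γ₂' ∩ S^{d−1} contained in Γ₂. Then for every N ≥ 0, sup_{ξ ∈ Γ₂'} ⟨ξ⟩^N (|u| * |g|)(ξ) < ∞. -/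
open MeasureTheory Complex ComplexConjugate
open scoped RealInnerProductSpace

noncomputable section

abbrev Ed (d : ℕ) := EuclideanSpace ℝ (Fin d)

/-- Japanese bracket on ℝ^d. -/
def jb {d : ℕ} (x : Ed d) : ℝ := Real.sqrt (1 + ‖x‖ ^ 2)

/-- Japanese bracket on phase space ℝ^{2d}. -/
def jb2 {d : ℕ} (z : Ed d × Ed d) : ℝ := Real.sqrt (1 + ‖z.1‖ ^ 2 + ‖z.2‖ ^ 2)

lemma le_of_sq_le_sq' {a b : ℝ} (ha : 0 ≤ a) (hb : 0 ≤ b) (h : a ^ 2 ≤ b ^ 2) : a ≤ b :=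
  calc a = Real.sqrt (a ^ 2) := (Real.sqrt_sq ha).symm
    _ ≤ Real.sqrt (b ^ 2) := Real.sqrt_le_sqrt h
    _ = b := Real.sqrt_sq hb

lemma one_le_jb {d : ℕ} (x : Ed d) : 1 ≤ jb x := by
  rw [jb]
  calc (1:ℝ) = Real.sqrt 1 := by simp
    _ ≤ _ := Real.sqrt_le_sqrt (le_add_of_nonneg_right (sq_nonneg _))

lemma jb_pos {d : ℕ} (x : Ed d) : 0 < jb x := lt_of_lt_of_le one_pos (one_le_jb x)

lemma jb_sq {d : ℕ} (x : Ed d) : jb x ^ 2 = 1 + ‖x‖ ^ 2 :=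
  Real.sq_sqrt (by positivity)

lemma jb_sub_le {d : ℕ} (x y : Ed d) : jb (x - y) ≤ Real.sqrt 2 * jb x * jb y := by
  refine le_of_sq_le_sq' (jb_pos _).le (mul_nonneg (mul_nonneg (Real.sqrt_nonneg 2) (jb_pos x).le) (jb_pos y).le) ?_
  have hn : ‖x - y‖ ≤ ‖x‖ + ‖y‖ := norm_sub_le x y
  have hn2 : ‖x - y‖ ^ 2 ≤ (‖x‖ + ‖y‖) ^ 2 := pow_le_pow_left₀ (norm_nonneg _) hn 2
  have hs : Real.sqrt 2 ^ 2 = 2 := Real.sq_sqrt (by norm_num)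
  have hr : (Real.sqrt 2 * jb x * jb y) ^ 2 = 2 * ((1 + ‖x‖^2) * (1 + ‖y‖^2)) := by
    rw [mul_pow, mul_pow, hs, jb_sq, jb_sq]; ring
  rw [jb_sq, hr]
  nlinarith [sq_nonneg (‖x‖ - ‖y‖), sq_nonneg (‖x‖*‖y‖)]

lemma jb_le_two_mul {d : ℕ} {x y : Ed d} (h : ‖y‖ ≤ ‖x‖ / 2) : jb x ≤ 2 * jb (x - y) := by
  refine le_of_sq_le_sq' (jb_pos _).le (mul_nonneg (by norm_num) (jb_pos _).le) ?_
  have hn : ‖x‖ - ‖y‖ ≤ ‖x - y‖ := by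
    have := norm_sub_norm_le x y; linarith [le_abs_self (‖x‖ - ‖y‖)]
  have hr : (2 * jb (x - y)) ^ 2 = 4 * (1 + ‖x - y‖ ^ 2) := by rw [mul_pow, jb_sq]; ring
  rw [jb_sq, hr]
  nlinarith [norm_nonneg x, norm_nonneg (x - y), sq_nonneg (‖x‖/2 - ‖x - y‖)]

lemma jb_le_inv_mul {d : ℕ} {x y : Ed d} {δ : ℝ} (hδ : 0 < δ) (hδ1 : δ ≤ 1)
    (h : δ * ‖x‖ ≤ ‖y‖) : jb x ≤ δ⁻¹ * jb y := by
  refine le_of_sq_le_sq' (jb_pos _).le (mul_nonneg (inv_nonneg.mpr hδ.le) (jb_pos _).le) ?_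
  have h' : (δ * ‖x‖) ^ 2 ≤ ‖y‖ ^ 2 := pow_le_pow_left₀ (by positivity) h 2
  have hδ2 : δ ^ 2 ≤ 1 := by nlinarith
  have key : δ ^ 2 * (1 + ‖x‖ ^ 2) ≤ 1 + ‖y‖ ^ 2 := by nlinarith
  have hr : (δ⁻¹ * jb y) ^ 2 = δ⁻¹ ^ 2 * (1 + ‖y‖ ^ 2) := by rw [mul_pow, jb_sq]
  rw [jb_sq, hr]
  have : 1 + ‖x‖ ^ 2 = δ⁻¹ ^ 2 * (δ ^ 2 * (1 + ‖x‖ ^ 2)) := by field_simp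
  rw [this]
  exact mul_le_mul_of_nonneg_left key (by positivity)

lemma continuous_jb {d : ℕ} : Continuous (jb (d := d)) := by
  unfold jb; fun_prop

lemma jb_le_one_add {d : ℕ} (x : Ed d) : jb x ≤ 1 + ‖x‖ := by
  refine le_of_sq_le_sq' (jb_pos _).le (by positivity) ?_
  rw [jb_sq]; nlinarith [norm_nonneg x]

lemma cone_sep {d : ℕ} (Γ₂ : Set (Ed d)) (hΓopen : IsOpen Γ₂)
    (hΓcone : ∀ ζ ∈ Γ₂, ∀ t : ℝ, 0 < t → t • ζ ∈ Γ₂)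
    (Γ₂' : Set (Ed d)) (hΓ'ne : ∀ ζ ∈ Γ₂', ζ ≠ 0)
    (hΓ'cone : ∀ ζ ∈ Γ₂', ∀ t : ℝ, 0 < t → t • ζ ∈ Γ₂')
    (hclos : closure (Γ₂' ∩ Metric.sphere (0 : Ed d) 1) ⊆ Γ₂) :
    ∃ δ : ℝ, 0 < δ ∧ δ ≤ 1/2 ∧ ∀ ξ ∈ Γ₂', ∀ η : Ed d, ‖η‖ ≤ δ * ‖ξ‖ → ξ - η ∈ Γ₂ := by
  have hK : IsCompact (closure (Γ₂' ∩ Metric.sphere (0:Ed d) 1)) :=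
    (isCompact_sphere (0:Ed d) 1).of_isClosed_subset isClosed_closure
      (closure_minimal Set.inter_subset_right Metric.isClosed_sphere)
  obtain ⟨ε, hεpos, hε⟩ := hK.exists_thickening_subset_open hΓopen hclos
  refine ⟨min (ε/2) (1/2), by positivity, min_le_right _ _, ?_⟩
  intro ξ hξ η hη
  have hnξ : 0 < ‖ξ‖ := norm_pos_iff.mpr (hΓ'ne ξ hξ)
  have hωmem : ‖ξ‖⁻¹ • ξ ∈ Γ₂' ∩ Metric.sphere (0:Ed d) 1 := by
    refine ⟨hΓ'cone ξ hξ _ (inv_pos.mpr hnξ), ?_⟩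
    simp [norm_smul, _root_.abs_of_pos (inv_pos.mpr hnξ), inv_mul_cancel₀ hnξ.ne']
  have hmem : ‖ξ‖⁻¹ • (ξ - η) ∈ Metric.thickening ε (closure (Γ₂' ∩ Metric.sphere (0:Ed d) 1)) := by
    rw [Metric.mem_thickening_iff]
    refine ⟨‖ξ‖⁻¹ • ξ, subset_closure hωmem, ?_⟩
    rw [dist_eq_norm]
    have heq : ‖ξ‖⁻¹ • (ξ - η) - ‖ξ‖⁻¹ • ξ = -(‖ξ‖⁻¹ • η) := by
      rw [smul_sub]; abel
    rw [heq, norm_neg, norm_smul, Real.norm_eq_abs, _root_.abs_of_pos (inv_pos.mpr hnξ)]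
    calc ‖ξ‖⁻¹ * ‖η‖ ≤ ‖ξ‖⁻¹ * (min (ε/2) (1/2) * ‖ξ‖) :=
          mul_le_mul_of_nonneg_left hη (inv_nonneg.mpr hnξ.le)
      _ = min (ε/2) (1/2) := by field_simp
      _ ≤ ε/2 := min_le_left _ _
      _ < ε := by linarith
  have h2 : ‖ξ‖⁻¹ • (ξ - η) ∈ Γ₂ := hε hmem
  have h3 := hΓcone _ h2 ‖ξ‖ hnξ
  rwa [smul_smul, mul_inv_cancel₀ hnξ.ne', one_smul] at h3

lemma integrable_jb_pow_mul {d : ℕ} (g : SchwartzMap (Ed d) ℂ) (k : ℕ) :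
    Integrable (fun η : Ed d => jb η ^ k * ‖g η‖) := by
  have hmaj : Integrable (fun η : Ed d => (2:ℝ)^k * ‖g η‖ + (2:ℝ)^k * (‖η‖^k * ‖g η‖)) :=
    (((g.integrable (μ := volume)).norm).const_mul _).add
      ((g.integrable_pow_mul volume k).const_mul _)
  refine hmaj.mono ((((continuous_jb).pow k).mul g.continuous.norm).aestronglyMeasurable) ?_
  refine Filter.Eventually.of_forall fun η => ?_
  have hb : jb η ^ k ≤ 2^k * (1 + ‖η‖^k) := by
    have h1 : jb η ^ k ≤ (1 + ‖η‖)^k :=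
      pow_le_pow_left₀ (jb_pos _).le (jb_le_one_add η) k
    refine h1.trans ?_
    rcases le_total ‖η‖ 1 with h | h
    · have : (1 + ‖η‖)^k ≤ 2^k := pow_le_pow_left₀ (by positivity) (by linarith) k
      have h2 : (0:ℝ) ≤ ‖η‖^k := by positivity
      nlinarith [pow_pos (two_pos (α := ℝ)) k]
    · have : (1 + ‖η‖)^k ≤ (2*‖η‖)^k := pow_le_pow_left₀ (by positivity) (by linarith) k
      have h2 : (2*‖η‖:ℝ)^k = 2^k * ‖η‖^k := mul_pow 2 ‖η‖ k
      nlinarith [pow_pos (two_pos (α := ℝ)) k]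
  have hnn : (0:ℝ) ≤ jb η ^ k * ‖g η‖ := mul_nonneg (pow_nonneg (jb_pos _).le k) (norm_nonneg _)
  rw [Real.norm_eq_abs, _root_.abs_of_nonneg hnn]
  have hle : jb η ^ k * ‖g η‖ ≤ 2^k * ‖g η‖ + 2^k * (‖η‖^k * ‖g η‖) := by
    have := mul_le_mul_of_nonneg_right hb (norm_nonneg (g η))
    nlinarith [norm_nonneg (g η)]
  exact hle.trans (le_abs_self _)


/-- Rapid decay of `|u| * |g|` on a slightly smaller cone. -/
theorem convolution_rapid_decay (d : ℕ) (u : Ed d → ℂ) (hmeas : Measurable u)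
    (C m : ℝ) (hC : 0 ≤ C) (hm : 0 ≤ m) (hbound : ∀ ξ, ‖u ξ‖ ≤ C * jb ξ ^ m)
    (g : SchwartzMap (Ed d) ℂ)
    (Γ₂ : Set (Ed d)) (hΓopen : IsOpen Γ₂) (hΓne : ∀ ζ ∈ Γ₂, ζ ≠ 0)
    (hΓcone : ∀ ζ ∈ Γ₂, ∀ t : ℝ, 0 < t → t • ζ ∈ Γ₂)
    (hdecay : ∀ N : ℝ, 0 ≤ N → ∃ C', ∀ ζ ∈ Γ₂, jb ζ ^ N * ‖u ζ‖ ≤ C')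
    (Γ₂' : Set (Ed d)) (hΓ'open : IsOpen Γ₂') (hΓ'ne : ∀ ζ ∈ Γ₂', ζ ≠ 0)
    (hΓ'cone : ∀ ζ ∈ Γ₂', ∀ t : ℝ, 0 < t → t • ζ ∈ Γ₂')
    (hclos : closure (Γ₂' ∩ Metric.sphere (0 : Ed d) 1) ⊆ Γ₂) :
    ∀ N : ℝ, 0 ≤ N → ∃ C'', ∀ ξ ∈ Γ₂',
      jb ξ ^ N * (∫ η, ‖u (ξ - η)‖ * ‖g η‖) ≤ C'' := by
  obtain ⟨δ, hδpos, hδhalf, hδ⟩ := cone_sep Γ₂ hΓopen hΓcone Γ₂' hΓ'ne hΓ'cone hclos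
  intro N hN
  obtain ⟨C₁, hC₁⟩ := hdecay N hN
  set k : ℕ := ⌈N + 2*m⌉₊ with hk
  set A : ℝ := (2:ℝ) ^ N * max C₁ 0 with hA
  set B : ℝ := C * Real.sqrt 2 ^ m * δ⁻¹ ^ (N + m) with hB
  have hA0 : 0 ≤ A := mul_nonneg (Real.rpow_nonneg (by norm_num) N) (le_max_right _ _)
  have hB0 : 0 ≤ B := mul_nonneg (mul_nonneg hC (Real.rpow_nonneg (Real.sqrt_nonneg 2) m))
    (Real.rpow_nonneg (inv_nonneg.mpr hδpos.le) _)
  have hF : Integrable (fun η : Ed d => (A + B * jb η ^ k) * ‖g η‖) := by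
    have : (fun η : Ed d => (A + B * jb η ^ k) * ‖g η‖)
        = fun η => A * ‖g η‖ + B * (jb η ^ k * ‖g η‖) := by funext η; ring
    rw [this]
    exact (((g.integrable (μ := volume)).norm).const_mul A).add
      ((integrable_jb_pow_mul g k).const_mul B)
  refine ⟨∫ η, (A + B * jb η ^ k) * ‖g η‖, fun ξ hξ => ?_⟩
  have hNξ0 : (0:ℝ) ≤ jb ξ ^ N := Real.rpow_nonneg (jb_pos ξ).le N
  have key : ∀ η : Ed d, jb ξ ^ N * ‖u (ξ - η)‖ ≤ A + B * jb η ^ k := by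
    intro η
    by_cases hcase : ‖η‖ ≤ δ * ‖ξ‖
    · have hmem : ξ - η ∈ Γ₂ := hδ ξ hξ η hcase
      have h2 : jb ξ ≤ 2 * jb (ξ - η) :=
        jb_le_two_mul (hcase.trans (by nlinarith [norm_nonneg ξ]))
      have h3 : jb ξ ^ N ≤ (2:ℝ)^N * jb (ξ-η)^N := by
        calc jb ξ ^ N ≤ (2 * jb (ξ-η))^N := Real.rpow_le_rpow (jb_pos ξ).le h2 hN
          _ = (2:ℝ)^N * jb (ξ-η)^N := Real.mul_rpow (by norm_num) (jb_pos _).le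
      calc jb ξ ^ N * ‖u (ξ-η)‖ ≤ ((2:ℝ)^N * jb (ξ-η)^N) * ‖u (ξ-η)‖ :=
            mul_le_mul_of_nonneg_right h3 (norm_nonneg _)
        _ = (2:ℝ)^N * (jb (ξ-η)^N * ‖u (ξ-η)‖) := by ring
        _ ≤ (2:ℝ)^N * max C₁ 0 := mul_le_mul_of_nonneg_left
            ((hC₁ _ hmem).trans (le_max_left _ _)) (Real.rpow_nonneg (by norm_num) N)
        _ = A := hA.symm
        _ ≤ A + B * jb η ^ k := le_add_of_nonneg_right
            (mul_nonneg hB0 (pow_nonneg (jb_pos η).le k))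
    · push_neg at hcase
      have h2 : jb ξ ≤ δ⁻¹ * jb η := jb_le_inv_mul hδpos (by linarith) hcase.le
      have e1 : (Real.sqrt 2 * jb ξ * jb η) ^ m
          = Real.sqrt 2 ^ m * jb ξ ^ m * jb η ^ m := by
        rw [Real.mul_rpow (mul_nonneg (Real.sqrt_nonneg 2) (jb_pos ξ).le) (jb_pos η).le,
          Real.mul_rpow (Real.sqrt_nonneg 2) (jb_pos ξ).le]
      have e2 : jb ξ ^ (N + m) = jb ξ ^ N * jb ξ ^ m := Real.rpow_add (jb_pos ξ) N m
      have e3 : (δ⁻¹ * jb η) ^ (N+m) = δ⁻¹^(N+m) * jb η ^ (N+m) :=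
        Real.mul_rpow (inv_nonneg.mpr hδpos.le) (jb_pos η).le
      have e4 : jb η ^ (N+m) * jb η ^ m = jb η ^ (N+2*m) := by
        rw [← Real.rpow_add (jb_pos η)]; ring_nf
      have e5 : jb η ^ (N+2*m) ≤ jb η ^ (k:ℝ) :=
        Real.rpow_le_rpow_of_exponent_le (one_le_jb η) (Nat.le_ceil _)
      have e6 : jb η ^ (k:ℝ) = jb η ^ k := Real.rpow_natCast _ k
      have hCs : (0:ℝ) ≤ C * Real.sqrt 2 ^ m :=
        mul_nonneg hC (Real.rpow_nonneg (Real.sqrt_nonneg 2) m)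
      calc jb ξ ^ N * ‖u (ξ-η)‖
          ≤ jb ξ ^ N * (C * jb (ξ-η)^m) := mul_le_mul_of_nonneg_left (hbound _) hNξ0
        _ ≤ jb ξ ^ N * (C * (Real.sqrt 2 * jb ξ * jb η)^m) :=
            mul_le_mul_of_nonneg_left (mul_le_mul_of_nonneg_left
              (Real.rpow_le_rpow (jb_pos _).le (jb_sub_le ξ η) hm) hC) hNξ0
        _ = C * Real.sqrt 2 ^ m * (jb ξ ^ (N+m) * jb η ^ m) := by rw [e1, e2]; ring
        _ ≤ C * Real.sqrt 2 ^ m * ((δ⁻¹ * jb η) ^ (N+m) * jb η ^ m) :=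
            mul_le_mul_of_nonneg_left (mul_le_mul_of_nonneg_right
              (Real.rpow_le_rpow (jb_pos ξ).le h2 (by linarith))
              (Real.rpow_nonneg (jb_pos η).le m)) hCs
        _ = B * jb η ^ (N+2*m) := by rw [e3, hB, ← e4]; ring
        _ ≤ B * jb η ^ (k:ℝ) := mul_le_mul_of_nonneg_left e5 hB0
        _ = B * jb η ^ k := by rw [e6]
        _ ≤ A + B * jb η ^ k := le_add_of_nonneg_left hA0
  calc jb ξ ^ N * ∫ η, ‖u (ξ - η)‖ * ‖g η‖
      = ∫ η, jb ξ ^ N * (‖u (ξ - η)‖ * ‖g η‖) := (integral_const_mul _ _).symm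
    _ ≤ ∫ η, (A + B * jb η ^ k) * ‖g η‖ := by
        refine integral_mono_of_nonneg (Filter.Eventually.of_forall fun η => ?_) hF
          (Filter.Eventually.of_forall fun η => ?_)
        · exact mul_nonneg hNξ0 (mul_nonneg (norm_nonneg _) (norm_nonneg _))
        · show jb ξ ^ N * (‖u (ξ - η)‖ * ‖g η‖) ≤ (A + B * jb η ^ k) * ‖g η‖
          rw [← mul_assoc]
          exact mul_le_mul_of_nonneg_right (key η) (norm_nonneg _)
end
end

section
/- If u ∈ 𝒮'(ℝ^d) has compact support, then its Gabor wave front set is contained in {0} × (ℝ^d \ {0}); i.e., if (x₀, ξ₀) ∈ WF_G(u) then x₀ = 0. -/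
open MeasureTheory Complex ComplexConjugate
open scoped InnerProductSpace

noncomputable section

/-- A conic subset of phase space. -/
def IsConic {d : ℕ} (Γ : Set (Ed d × Ed d)) : Prop :=
  ∀ z ∈ Γ, ∀ t : ℝ, 0 < t → t • z ∈ Γ

/-- Superpolynomial decay of `V` on `Γ`. -/
def RapidDecayOn {d : ℕ} (V : Ed d × Ed d → ℂ) (Γ : Set (Ed d × Ed d)) : Prop :=
  ∀ N : ℝ, 0 ≤ N → ∃ C : ℝ, ∀ z ∈ Γ, jb2 z ^ N * ‖V z‖ ≤ C

/-- `z₀` is not in the Gabor wave front set measured through the STFT-type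
transform `V`: there is an open conic set `Γ ∋ z₀` in `ℝ^{2d} \ {0}` on which
`V` decays super-polynomially. -/
def NotInWFG {d : ℕ} (V : Ed d × Ed d → ℂ) (z₀ : Ed d × Ed d) : Prop :=
  ∃ Γ : Set (Ed d × Ed d), IsOpen Γ ∧ (∀ z ∈ Γ, z ≠ 0) ∧ IsConic Γ ∧ z₀ ∈ Γ ∧
    RapidDecayOn V Γ

/-! `u` only sees the ball `‖y‖ ≤ R`, so `V_φ u(x, ξ) = u(χ · M_ξ T_x φ̄)` for a bump `χ` equal
to `1` there. On the support of `χ` we have `⟨x⟩ ≲ ⟨y - x⟩`, hence every Schwartz seminorm of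
`χ · M_ξ T_x φ̄` is `O(⟨ξ⟩^n ⟨x⟩^{-m})` for all `m`, and by continuity `|u|` is controlled by
finitely many of them. In a cone `‖ξ‖ < K ‖x‖` around a point with `x ≠ 0` we have
`⟨(x, ξ)⟩ ≲ ⟨x⟩`, which turns this into rapid decay. -/

open scoped ContDiff SchwartzMap

theorem one_add_norm_le_mul_one_add_norm_sub {E : Type*} [SeminormedAddCommGroup E] {x y : E}
    {ρ : ℝ} (hy : ‖y‖ ≤ ρ) : 1 + ‖x‖ ≤ (1 + ρ) * (1 + ‖y - x‖) := by
  nlinarith [norm_nonneg y, norm_nonneg (y - x), norm_sub_rev x y, norm_sub_norm_le x y]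

section Calculus

variable {E : Type*} [NormedAddCommGroup E] [NormedSpace ℝ E]

theorem norm_iteratedFDeriv_mul_le_of_forall_le {𝔸 : Type*} [NormedRing 𝔸] [NormedAlgebra ℝ 𝔸]
    {f g : E → 𝔸} (hf : ContDiff ℝ ∞ f) (hg : ContDiff ℝ ∞ g) {x : E} {n : ℕ} {A B : ℝ}
    (hA : ∀ i ≤ n, ‖iteratedFDeriv ℝ i f x‖ ≤ A) (hB : ∀ i ≤ n, ‖iteratedFDeriv ℝ i g x‖ ≤ B) :
    ∀ i ≤ n, ‖iteratedFDeriv ℝ i (fun y => f y * g y) x‖ ≤ 2 ^ n * (A * B) := by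
  intro i hi
  have hA0 : 0 ≤ A := (norm_nonneg _).trans (hA 0 n.zero_le)
  have hB0 : 0 ≤ B := (norm_nonneg _).trans (hB 0 n.zero_le)
  calc ‖iteratedFDeriv ℝ i (fun y => f y * g y) x‖
      ≤ ∑ j ∈ Finset.range (i + 1), (i.choose j : ℝ) *
          ‖iteratedFDeriv ℝ j f x‖ * ‖iteratedFDeriv ℝ (i - j) g x‖ :=
        norm_iteratedFDeriv_mul_le hf hg x (mod_cast le_top)
    _ ≤ ∑ j ∈ Finset.range (i + 1), (i.choose j : ℝ) * A * B := by
        gcongr with j hj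
        · exact hA j (by grind)
        · exact hB (i - j) (by grind)
    _ = 2 ^ i * (A * B) := by
        rw [← Finset.sum_mul, ← Finset.sum_mul, mul_assoc]
        exact_mod_cast congrArg (fun s : ℕ => (s : ℝ) * (A * B)) (Nat.sum_range_choose i)
    _ ≤ 2 ^ n * (A * B) := by gcongr; norm_num

theorem norm_iteratedFDeriv_cexp_comp_le (c : E →L[ℝ] ℂ) (hc : ∀ y, (c y).re = 0) (n : ℕ)
    (y : E) : ‖iteratedFDeriv ℝ n (fun z => cexp (c z)) y‖ ≤ ‖c‖ ^ n := by
  induction n generalizing y with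
  | zero => simp [Complex.norm_exp, hc]
  | succ n ih =>
    let L : ℂ →L[ℝ] E →L[ℝ] ℂ := ((ContinuousLinearMap.id ℂ ℂ).smulRight c).restrictScalars ℝ
    have hL : ‖L‖ ≤ ‖c‖ := by
      simp [L, ContinuousLinearMap.norm_smulRight_apply]
    have hD : fderiv ℝ (fun z => cexp (c z)) = L ∘ fun z => cexp (c z) := by
      funext z
      exact (c.hasFDerivAt.cexp).fderiv
    rw [← norm_iteratedFDeriv_fderiv, hD, pow_succ']
    calc ‖iteratedFDeriv ℝ n (L ∘ fun z => cexp (c z)) y‖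
        ≤ ‖L‖ * ‖iteratedFDeriv ℝ n (fun z => cexp (c z)) y‖ :=
          L.norm_iteratedFDeriv_comp_left
            ((Complex.contDiff_exp (𝕜 := ℝ)).comp c.contDiff).contDiffAt
            (mod_cast le_top)
      _ ≤ ‖c‖ * ‖c‖ ^ n := by gcongr; exact ih y

theorem exists_forall_norm_iteratedFDeriv_le_of_hasCompactSupport {F : Type*}
    [NormedAddCommGroup F] [NormedSpace ℝ F] {f : E → F} (hf : ContDiff ℝ ∞ f)
    (hc : HasCompactSupport f) (n : ℕ) :
    ∃ C, ∀ i ≤ n, ∀ y, ‖iteratedFDeriv ℝ i f y‖ ≤ C := by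
  choose C hC using fun i => (hc.iteratedFDeriv (𝕜 := ℝ) i).exists_bound_of_continuous
    (hf.continuous_iteratedFDeriv (mod_cast le_top))
  obtain ⟨M, hM⟩ := ((Finset.range (n + 1)).image C).exists_le
  exact ⟨M, fun i hi y => (hC i y).trans
    (hM _ (Finset.mem_image_of_mem C (Finset.mem_range_succ_iff.2 hi)))⟩

theorem norm_iteratedFDeriv_conj_comp_sub_mul_le (φ : 𝓢(E, ℂ)) {m n i : ℕ} (hi : i ≤ n)
    {x y : E} {ρ : ℝ} (hy : ‖y‖ ≤ ρ) :
    ‖iteratedFDeriv ℝ i (fun z => conj (φ (z - x))) y‖ * (1 + ‖x‖) ^ m ≤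
      (1 + ρ) ^ m *
        (2 ^ m * (Finset.Iic (m, n)).sup (fun kn => SchwartzMap.seminorm ℝ kn.1 kn.2) φ) := by
  have hconj : (fun z => conj (φ (z - x))) = conjLIE ∘ fun z => φ (z - x) := rfl
  rw [hconj, conjLIE.norm_iteratedFDeriv_comp_left, iteratedFDeriv_comp_sub]
  calc ‖iteratedFDeriv ℝ i φ (y - x)‖ * (1 + ‖x‖) ^ m
      ≤ ‖iteratedFDeriv ℝ i φ (y - x)‖ * ((1 + ρ) * (1 + ‖y - x‖)) ^ m := by
        gcongr; exact one_add_norm_le_mul_one_add_norm_sub hy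
    _ = (1 + ρ) ^ m * ((1 + ‖y - x‖) ^ m * ‖iteratedFDeriv ℝ i φ (y - x)‖) := by
        rw [mul_pow]; ring
    _ ≤ _ := mul_le_mul_of_nonneg_left
        (φ.one_add_le_sup_seminorm_apply (𝕜 := ℝ) (m := (m, n)) le_rfl hi (y - x))
        (pow_nonneg (by linarith [norm_nonneg y]) m)

end Calculus

theorem SchwartzMap.exists_pow_mul_norm_apply_le {E F G ι : Type*} [NormedAddCommGroup E]
    [NormedSpace ℝ E] [NormedAddCommGroup F] [NormedSpace ℝ F] [NormedAddCommGroup G]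
    [NormedSpace ℝ G] (u : 𝓢(E, F) →L[ℝ] G) (f : ι → 𝓢(E, F)) (w : ι → ℝ)
    (hw : ∀ i, 0 ≤ w i) (hf : ∀ k n M : ℕ, ∃ C, ∀ i, w i ^ M * SchwartzMap.seminorm ℝ k n (f i) ≤ C)
    (M : ℕ) : ∃ C, ∀ i, w i ^ M * ‖u (f i)‖ ≤ C := by
  obtain ⟨s, C₀, -, hC₀⟩ := Seminorm.bound_of_continuous (schwartz_withSeminorms ℝ E F)
    ((normSeminorm ℝ G).comp u.toLinearMap) (continuous_norm.comp u.continuous)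
  choose C hC using fun kn : ℕ × ℕ => hf kn.1 kn.2 M
  refine ⟨C₀ * ∑ kn ∈ s, C kn, fun i => ?_⟩
  calc w i ^ M * ‖u (f i)‖
      ≤ w i ^ M * (C₀ * ∑ kn ∈ s, schwartzSeminormFamily ℝ E F kn (f i)) := by
        refine mul_le_mul_of_nonneg_left ((hC₀ (f i)).trans ?_) (pow_nonneg (hw i) M)
        rw [smul_apply, NNReal.smul_def, smul_eq_mul]
        gcongr
        simpa using Seminorm.finset_sup_le_sum (schwartzSeminormFamily ℝ E F) s (f i)
    _ = C₀ * ∑ kn ∈ s, w i ^ M * schwartzSeminormFamily ℝ E F kn (f i) := by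
        simp only [Finset.mul_sum, mul_left_comm]
    _ ≤ C₀ * ∑ kn ∈ s, C kn := by
        gcongr with kn; exact hC kn i

theorem map_smulLeftCLM_eq_of_eq_one_on_closedBall {E G : Type*} [NormedAddCommGroup E]
    [NormedSpace ℝ E] [NormedAddCommGroup G] [NormedSpace ℝ G] (u : 𝓢(E, ℂ) →L[ℝ] G) {R : ℝ}
    (hsupp : ∀ f : 𝓢(E, ℂ), (∀ y : E, ‖y‖ ≤ R → f y = 0) → u f = 0) {χ : E → ℂ}
    (hχ : χ.HasTemperateGrowth) (hχ1 : ∀ y : E, ‖y‖ ≤ R → χ y = 1) (f : 𝓢(E, ℂ)) :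
    u (SchwartzMap.smulLeftCLM ℂ χ f) = u f := by
  have h := hsupp (SchwartzMap.smulLeftCLM ℂ χ f - f) fun y hy => by simp [hχ, hχ1 y hy]
  rwa [map_sub, sub_eq_zero] at h

def spatialCone {E : Type*} [Norm E] (K : ℝ) : Set (E × E) :=
  {z | ‖z.2‖ < K * ‖z.1‖}

section SpatialCone

variable {E : Type*} [NormedAddCommGroup E] {K : ℝ}

theorem isOpen_spatialCone (K : ℝ) : IsOpen (spatialCone K : Set (E × E)) :=
  isOpen_lt (continuous_norm.comp continuous_snd)
    (continuous_const.mul (continuous_norm.comp continuous_fst))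

theorem ne_zero_of_mem_spatialCone {z : E × E} (hz : z ∈ spatialCone K) : z ≠ 0 := by
  rintro rfl
  simp [spatialCone] at hz

theorem mem_spatialCone_of_fst_ne_zero {z : E × E} (hz : z.1 ≠ 0) :
    z ∈ spatialCone ((‖z.2‖ + 1) / ‖z.1‖) := by
  simp [spatialCone, div_mul_cancel₀ _ (norm_ne_zero_iff.2 hz)]

theorem one_add_norm_snd_le_of_mem_spatialCone (hK : 0 ≤ K) {z : E × E}
    (hz : z ∈ spatialCone K) : 1 + ‖z.2‖ ≤ (1 + K) * (1 + ‖z.1‖) := by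
  have : ‖z.2‖ < K * ‖z.1‖ := hz
  nlinarith [norm_nonneg z.1]

end SpatialCone

theorem isConic_spatialCone {d : ℕ} (K : ℝ) : IsConic (spatialCone K : Set (Ed d × Ed d)) := by
  intro z hz t ht
  simp only [spatialCone, Set.mem_ofPred_eq, Prod.smul_fst, Prod.smul_snd, norm_smul,
    Real.norm_of_nonneg ht.le] at hz ⊢
  rw [mul_left_comm]
  exact mul_lt_mul_of_pos_left hz ht

section Window

variable {E : Type*} [NormedAddCommGroup E] [InnerProductSpace ℝ E]

theorem norm_iteratedFDeriv_cexp_inner_le (ξ y : E) (n : ℕ) :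
    ‖iteratedFDeriv ℝ n (fun z => cexp (-I * (⟪z, ξ⟫_ℝ : ℂ))) y‖ ≤ ‖ξ‖ ^ n := by
  let c : E →L[ℝ] ℂ := -I • (ofRealCLM ∘L innerSL ℝ ξ)
  have hc : ∀ z, c z = -I * (⟪z, ξ⟫_ℝ : ℂ) := fun z => by simp [c, real_inner_comm]
  have hcξ : ‖c‖ ≤ ‖ξ‖ := c.opNorm_le_bound (norm_nonneg ξ) fun z => by
    simpa [hc, mul_comm] using abs_real_inner_le_norm z ξ
  simp_rw [← hc]
  exact (norm_iteratedFDeriv_cexp_comp_le c (fun z => by simp [hc]) n y).trans (by gcongr)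

theorem exists_norm_iteratedFDeriv_cutoff_window_le {χ : E → ℂ} (hχ : ContDiff ℝ ∞ χ)
    (hχc : HasCompactSupport χ) (φ : 𝓢(E, ℂ)) (k n m : ℕ) :
    ∃ C, 0 ≤ C ∧ ∀ x ξ y : E, ‖y‖ ^ k * ‖iteratedFDeriv ℝ n
      (fun z => χ z * (conj (φ (z - x)) * cexp (-I * (⟪z, ξ⟫_ℝ : ℂ)))) y‖ * (1 + ‖x‖) ^ m ≤
      C * (1 + ‖ξ‖) ^ n := by
  obtain ⟨ρ, hρ, hχρ⟩ := hχc.isCompact.isBounded.subset_closedBall_lt 0 (0 : E)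
  obtain ⟨Cχ, hCχ⟩ := exists_forall_norm_iteratedFDeriv_le_of_hasCompactSupport hχ hχc n
  have hCχ0 : 0 ≤ Cχ := (norm_nonneg _).trans (hCχ 0 n.zero_le 0)
  set S := 2 ^ m * (Finset.Iic (m, n)).sup (fun kn => SchwartzMap.seminorm ℝ kn.1 kn.2) φ
  have hS0 : 0 ≤ S := by positivity
  refine ⟨ρ ^ k * (2 ^ n * (Cχ * (2 ^ n * ((1 + ρ) ^ m * S)))), by positivity, fun x ξ y => ?_⟩
  by_cases hy : y ∈ tsupport χ
  case neg =>
    have hzero : iteratedFDeriv ℝ n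
        (fun z => χ z * (conj (φ (z - x)) * cexp (-I * (⟪z, ξ⟫_ℝ : ℂ)))) y = 0 :=
      Function.notMem_support.1 fun h => hy (tsupport_mul_subset_left
        (support_iteratedFDeriv_subset n h))
    rw [hzero, norm_zero, mul_zero, zero_mul]
    positivity
  have hyρ : ‖y‖ ≤ ρ := by simpa using hχρ hy
  have hx : 0 < (1 + ‖x‖) ^ m := by positivity
  have hψ : ∀ i ≤ n, ‖iteratedFDeriv ℝ i (fun z => conj (φ (z - x))) y‖ ≤
      (1 + ρ) ^ m * S / (1 + ‖x‖) ^ m := fun i hi =>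
    (le_div_iff₀ hx).2 (norm_iteratedFDeriv_conj_comp_sub_mul_le φ hi hyρ)
  have he : ∀ i ≤ n, ‖iteratedFDeriv ℝ i (fun z => cexp (-I * (⟪z, ξ⟫_ℝ : ℂ))) y‖ ≤
      (1 + ‖ξ‖) ^ n := fun i hi =>
    (norm_iteratedFDeriv_cexp_inner_le ξ y i).trans <|
      (pow_le_pow_left₀ (norm_nonneg ξ) (by linarith) i).trans
        (pow_le_pow_right₀ (by linarith [norm_nonneg ξ]) hi)
  have hψ_smooth : ContDiff ℝ ∞ fun z => conj (φ (z - x)) :=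
    conjCLE.contDiff.comp ((φ.smooth ⊤).comp (contDiff_id.sub contDiff_const))
  have he_smooth : ContDiff ℝ ∞ fun z => cexp (-I * (⟪z, ξ⟫_ℝ : ℂ)) :=
    (Complex.contDiff_exp (𝕜 := ℝ)).comp
      (contDiff_const.mul (ofRealCLM.contDiff.comp (contDiff_id.inner ℝ contDiff_const)))
  have hD := norm_iteratedFDeriv_mul_le_of_forall_le hχ (hψ_smooth.mul he_smooth)
    (fun i hi => hCχ i hi y) (norm_iteratedFDeriv_mul_le_of_forall_le hψ_smooth he_smooth hψ he)
    n le_rfl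
  calc ‖y‖ ^ k * ‖iteratedFDeriv ℝ n
        (fun z => χ z * (conj (φ (z - x)) * cexp (-I * (⟪z, ξ⟫_ℝ : ℂ)))) y‖ * (1 + ‖x‖) ^ m
      ≤ ρ ^ k * (2 ^ n * (Cχ * (2 ^ n * ((1 + ρ) ^ m * S / (1 + ‖x‖) ^ m *
          (1 + ‖ξ‖) ^ n)))) * (1 + ‖x‖) ^ m := by
        gcongr
    _ = ρ ^ k * (2 ^ n * (Cχ * (2 ^ n * ((1 + ρ) ^ m * S)))) * (1 + ‖ξ‖) ^ n := by
        field_simp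

theorem exists_seminorm_smulLeftCLM_window_mul_le {χ : E → ℂ} (hχ : ContDiff ℝ ∞ χ)
    (hχc : HasCompactSupport χ) {φ : 𝓢(E, ℂ)} {W : E → E → 𝓢(E, ℂ)}
    (hW : ∀ x ξ y, W x ξ y = conj (φ (y - x)) * cexp (-I * (⟪y, ξ⟫_ℝ : ℂ))) (k n m : ℕ) :
    ∃ C, 0 ≤ C ∧ ∀ x ξ, SchwartzMap.seminorm ℝ k n (SchwartzMap.smulLeftCLM ℂ χ (W x ξ)) *
      (1 + ‖x‖) ^ m ≤ C * (1 + ‖ξ‖) ^ n := by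
  obtain ⟨C, hC0, hC⟩ := exists_norm_iteratedFDeriv_cutoff_window_le hχ hχc φ k n m
  refine ⟨C, hC0, fun x ξ => ?_⟩
  rw [← le_div_iff₀ (by positivity)]
  refine SchwartzMap.seminorm_le_bound ℝ k n _ (by positivity) fun y => ?_
  have hcut : ⇑(SchwartzMap.smulLeftCLM ℂ χ (W x ξ)) =
      fun z => χ z * (conj (φ (z - x)) * cexp (-I * (⟪z, ξ⟫_ℝ : ℂ))) := by
    funext z
    simp [hχc.hasTemperateGrowth hχ, hW]
  rw [hcut, le_div_iff₀ (by positivity)]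
  exact hC x ξ y

theorem exists_one_add_norm_pow_mul_seminorm_window_le_on_spatialCone {χ : E → ℂ}
    (hχ : ContDiff ℝ ∞ χ) (hχc : HasCompactSupport χ) {φ : 𝓢(E, ℂ)} {W : E → E → 𝓢(E, ℂ)}
    (hW : ∀ x ξ y, W x ξ y = conj (φ (y - x)) * cexp (-I * (⟪y, ξ⟫_ℝ : ℂ)))
    {K : ℝ} (hK : 0 ≤ K) (k n M : ℕ) :
    ∃ C, ∀ z ∈ spatialCone K, (1 + ‖z.1‖) ^ M *
      SchwartzMap.seminorm ℝ k n (SchwartzMap.smulLeftCLM ℂ χ (W z.1 z.2)) ≤ C := by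
  obtain ⟨C, hC0, hC⟩ := exists_seminorm_smulLeftCLM_window_mul_le hχ hχc hW k n (M + n)
  refine ⟨C * (1 + K) ^ n, fun z hz => ?_⟩
  -- on the cone `⟨ξ⟩^n ≲ ⟨x⟩^n`, so decay of order `M + n` in `x` leaves decay of order `M`
  refine le_of_mul_le_mul_right ?_ (by positivity : (0 : ℝ) < (1 + ‖z.1‖) ^ n)
  calc (1 + ‖z.1‖) ^ M *
        SchwartzMap.seminorm ℝ k n (SchwartzMap.smulLeftCLM ℂ χ (W z.1 z.2)) * (1 + ‖z.1‖) ^ n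
      = SchwartzMap.seminorm ℝ k n (SchwartzMap.smulLeftCLM ℂ χ (W z.1 z.2)) *
          (1 + ‖z.1‖) ^ (M + n) := by ring
    _ ≤ C * (1 + ‖z.2‖) ^ n := hC z.1 z.2
    _ ≤ C * ((1 + K) * (1 + ‖z.1‖)) ^ n := by
        gcongr; exact one_add_norm_snd_le_of_mem_spatialCone hK hz
    _ = C * (1 + K) ^ n * (1 + ‖z.1‖) ^ n := by rw [mul_pow, mul_assoc]

end Window

theorem one_le_jb2 {d : ℕ} (z : Ed d × Ed d) : 1 ≤ jb2 z :=
  Real.one_le_sqrt.2 (le_add_of_le_of_nonneg (le_add_of_nonneg_right (sq_nonneg _)) (sq_nonneg _))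

theorem jb2_le_one_add_norm_add_norm {d : ℕ} (z : Ed d × Ed d) :
    jb2 z ≤ 1 + ‖z.1‖ + ‖z.2‖ :=
  (Real.sqrt_le_left (by positivity)).2 (by nlinarith [norm_nonneg z.1, norm_nonneg z.2])

theorem rapidDecayOn_spatialCone_of_forall_pow {d : ℕ} {V : Ed d × Ed d → ℂ} {K : ℝ}
    (hK : 0 ≤ K) (hV : ∀ M : ℕ, ∃ C, ∀ z ∈ spatialCone K, (1 + ‖z.1‖) ^ M * ‖V z‖ ≤ C) :
    RapidDecayOn V (spatialCone K) := by
  intro N _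
  obtain ⟨C, hC⟩ := hV ⌈N⌉₊
  refine ⟨(2 + K) ^ ⌈N⌉₊ * C, fun z hz => ?_⟩
  have hjb : jb2 z ≤ (2 + K) * (1 + ‖z.1‖) := by
    nlinarith [jb2_le_one_add_norm_add_norm z, one_add_norm_snd_le_of_mem_spatialCone hK hz,
      norm_nonneg z.1]
  calc jb2 z ^ N * ‖V z‖ ≤ jb2 z ^ ⌈N⌉₊ * ‖V z‖ := by
        gcongr
        rw [← Real.rpow_natCast]
        exact Real.rpow_le_rpow_of_exponent_le (one_le_jb2 z) (Nat.le_ceil N)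
    _ ≤ ((2 + K) * (1 + ‖z.1‖)) ^ ⌈N⌉₊ * ‖V z‖ := by
        gcongr
        exact zero_le_one.trans (one_le_jb2 z)
    _ = (2 + K) ^ ⌈N⌉₊ * ((1 + ‖z.1‖) ^ ⌈N⌉₊ * ‖V z‖) := by rw [mul_pow]; ring
    _ ≤ (2 + K) ^ ⌈N⌉₊ * C := by gcongr; exact hC z hz

theorem WFG_of_compact_support_in_zero_section_general (d : ℕ)
    (u : SchwartzMap (Ed d) ℂ →L[ℝ] ℂ) (R : ℝ) (hR : 0 < R)
    (hsupp : ∀ f : SchwartzMap (Ed d) ℂ, (∀ y : Ed d, ‖y‖ ≤ R → f y = 0) → u f = 0)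
    (φ : SchwartzMap (Ed d) ℂ)
    (W : SchwartzMap (Ed d) ℂ → Ed d → Ed d → SchwartzMap (Ed d) ℂ)
    (hW : ∀ (ψ : SchwartzMap (Ed d) ℂ) (x ξ y : Ed d),
      W ψ x ξ y = conj (ψ (y - x)) * Complex.exp (-Complex.I * (⟪y, ξ⟫_ℝ : ℂ))) :
    ∀ z₀ : Ed d × Ed d, z₀.1 ≠ 0 → NotInWFG (fun z => u (W φ z.1 z.2)) z₀ := by
  intro z₀ hz₀
  let b : ContDiffBump (0 : Ed d) := ⟨R, 2 * R, hR, by linarith⟩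
  let χ : Ed d → ℂ := fun y => (b y : ℂ)
  have hχ : ContDiff ℝ ∞ χ := ofRealCLM.contDiff.comp b.contDiff
  have hχc : HasCompactSupport χ := b.hasCompactSupport.comp_left ofReal_zero
  have hcut (f : 𝓢(Ed d, ℂ)) : u (SchwartzMap.smulLeftCLM ℂ χ f) = u f :=
    map_smulLeftCLM_eq_of_eq_one_on_closedBall u hsupp (hχc.hasTemperateGrowth hχ)
      (fun y hy => by simp [χ, b.one_of_mem_closedBall (by simpa using hy)]) f
  set K := (‖z₀.2‖ + 1) / ‖z₀.1‖
  have hK : 0 ≤ K := by positivity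
  refine ⟨spatialCone K, isOpen_spatialCone K, fun _ => ne_zero_of_mem_spatialCone,
    isConic_spatialCone K, mem_spatialCone_of_fst_ne_zero hz₀,
    rapidDecayOn_spatialCone_of_forall_pow hK fun M => ?_⟩
  obtain ⟨C, hC⟩ := SchwartzMap.exists_pow_mul_norm_apply_le u
    (fun z : spatialCone K => SchwartzMap.smulLeftCLM ℂ χ (W φ z.1.1 z.1.2))
    (fun z => 1 + ‖z.1.1‖) (fun _ => by positivity) (fun k n M => by
      obtain ⟨C, hC⟩ := exists_one_add_norm_pow_mul_seminorm_window_le_on_spatialCone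
        hχ hχc (hW φ) hK k n M
      exact ⟨C, fun z => hC z.1 z.2⟩) M
  exact ⟨C, fun z hz => by simpa [hcut] using hC ⟨z, hz⟩⟩

/-- The Gabor wave front set of a compactly supported distribution is contained in
`{0} × (ℝ^d \ {0})`: any point with nonzero first coordinate is not in `WF_G(u)`.
Here `W φ x ξ` is the Schwartz window `y ↦ conj(φ(y-x)) e^{-i⟨y,ξ⟩}`, so that
`V_φ u (x,ξ) = u (W φ x ξ)` is the short-time Fourier transform. -/
theorem WFG_of_compact_support_in_zero_section (d : ℕ)
    (u : SchwartzMap (Ed d) ℂ →L[ℝ] ℂ) (R : ℝ) (hR : 0 < R)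
    (hsupp : ∀ f : SchwartzMap (Ed d) ℂ, (∀ y : Ed d, ‖y‖ ≤ R → f y = 0) → u f = 0)
    (φ : SchwartzMap (Ed d) ℂ) (hφ : φ ≠ 0)
    (W : SchwartzMap (Ed d) ℂ → Ed d → Ed d → SchwartzMap (Ed d) ℂ)
    (hW : ∀ (ψ : SchwartzMap (Ed d) ℂ) (x ξ y : Ed d),
      W ψ x ξ y = conj (ψ (y - x)) * Complex.exp (-Complex.I * (⟪y, ξ⟫_ℝ : ℂ))) :
    ∀ z₀ : Ed d × Ed d, z₀.1 ≠ 0 → NotInWFG (fun z => u (W φ z.1 z.2)) z₀ :=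
  WFG_of_compact_support_in_zero_section_general d u R hR hsupp φ W hW
end
end
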